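/- arXiv:2010.11571 — 8 statements merged into one kernel-verified Lean document; each statement's English description precedes it below -/
import Mathlib

section
/- Let u ≠ v be points in the plane. The only unit vector d such that the closed cone {w : angle(w − u, d) ≤ π/3} with apex u contains the entire side region {w ≠ v : angle(w − v, v − u) ≤ π/3} is d = (v − u)/‖v − u‖. -/
open Real

local notation "⟪" x ", " y "⟫" => @inner ℝ _ _ x y

private lemma arccos_half : Real.arccos (1/2) = π/3 := by
  rw [← Real.cos_pi_div_three, Real.arccos_cos (by positivity) (by linarith [Real.pi_pos])]

/-- From angle ≤ π/3 to inner product bound. -/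
private lemma inner_ge_of_angle_le {E : Type*} [NormedAddCommGroup E] [InnerProductSpace ℝ E]
    {x y : E} (hx : x ≠ 0) (hy : y ≠ 0)
    (h : InnerProductGeometry.angle x y ≤ π/3) : ‖x‖ * ‖y‖ / 2 ≤ ⟪x, y⟫ := by
  have h1 : Real.cos (π/3) ≤ Real.cos (InnerProductGeometry.angle x y) :=
    Real.cos_le_cos_of_nonneg_of_le_pi (InnerProductGeometry.angle_nonneg x y)
      (by linarith [Real.pi_pos]) h
  rw [InnerProductGeometry.cos_angle, Real.cos_pi_div_three] at h1
  have hpos : 0 < ‖x‖ * ‖y‖ :=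
    mul_pos (norm_pos_iff.2 hx) (norm_pos_iff.2 hy)
  rw [le_div_iff₀ hpos] at h1
  linarith

/-- From inner product bound to angle ≤ π/3. -/
private lemma angle_le_of_inner_ge {E : Type*} [NormedAddCommGroup E] [InnerProductSpace ℝ E]
    {x y : E} (hx : x ≠ 0) (hy : y ≠ 0)
    (h : ‖x‖ * ‖y‖ / 2 ≤ ⟪x, y⟫) : InnerProductGeometry.angle x y ≤ π/3 := by
  have hpos : 0 < ‖x‖ * ‖y‖ :=
    mul_pos (norm_pos_iff.2 hx) (norm_pos_iff.2 hy)
  have hcs : ⟪x, y⟫ ≤ ‖x‖ * ‖y‖ := real_inner_le_norm x y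
  have h2 : (1:ℝ)/2 ≤ ⟪x, y⟫ / (‖x‖ * ‖y‖) := (le_div_iff₀ hpos).2 (by linarith)
  have h3 : ⟪x, y⟫ / (‖x‖ * ‖y‖) ≤ 1 := (div_le_one hpos).2 hcs
  have h4 := Real.strictAntiOn_arccos.antitoneOn (Set.mem_Icc.2 ⟨by norm_num, by norm_num⟩)
    (Set.mem_Icc.2 ⟨by linarith, h3⟩) h2
  rw [arccos_half] at h4
  exact h4

set_option maxHeartbeats 1000000 in
theorem unique_unit_axis_containing_side_region (u v : EuclideanSpace ℝ (Fin 2)) (huv : u ≠ v) :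
    ∀ d : EuclideanSpace ℝ (Fin 2), ‖d‖ = 1 →
      ((∀ w : EuclideanSpace ℝ (Fin 2), w ≠ v →
          InnerProductGeometry.angle (w - v) (v - u) ≤ π / 3 →
          InnerProductGeometry.angle (w - u) d ≤ π / 3) ↔
        d = ‖v - u‖⁻¹ • (v - u)) := by
  intro d hd
  set a : EuclideanSpace ℝ (Fin 2) := v - u with ha
  have ha0 : a ≠ 0 := sub_ne_zero.2 huv.symm
  set L : ℝ := ‖a‖ with hL
  have hL0 : 0 < L := norm_pos_iff.2 ha0
  have haa : ⟪a, a⟫ = L^2 := real_inner_self_eq_norm_sq a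
  constructor
  · -- uniqueness direction
    intro h
    -- build perpendicular vector
    set b : EuclideanSpace ℝ (Fin 2) := (WithLp.equiv 2 (Fin 2 → ℝ)).symm ![-(a 1), a 0] with hb
    have hb0 : b 0 = -(a 1) := rfl
    have hb1 : b 1 = a 0 := rfl
    have hab : ⟪a, b⟫ = 0 := by
      rw [PiLp.inner_apply]
      simp [Fin.sum_univ_two, hb0, hb1]
      ring
    have hnb : ‖b‖ = L := by
      rw [hL, EuclideanSpace.norm_eq a, EuclideanSpace.norm_eq b]
      congr 1
      simp [Fin.sum_univ_two, hb0, hb1]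
      ring
    have hbb : ⟪b, b⟫ = L^2 := by
      rw [real_inner_self_eq_norm_sq, hnb]
    have hba : ⟪b, a⟫ = 0 := by rw [real_inner_comm]; exact hab
    have key : ∀ r : EuclideanSpace ℝ (Fin 2), ‖r‖ = L → ⟪r, a⟫ = L^2/2 →
        L/2 ≤ ⟪r, d⟫ := by
      intro r hr hra
      have hr0 : r ≠ 0 := by
        intro h0; rw [h0, norm_zero] at hr; linarith
      have hang : InnerProductGeometry.angle r a = π/3 := by
        rw [InnerProductGeometry.angle, hra, hr, ← hL]
        have hq : L^2/2 / (L * L) = 1/2 := by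
          field_simp
        rw [hq, arccos_half]
      by_contra hcon
      push_neg at hcon
      obtain ⟨ε, hε, hεpos⟩ : ∃ ε : ℝ, ε = L/2 - ⟪r, d⟫ ∧ 0 < ε := ⟨_, rfl, by linarith⟩
      obtain ⟨t, ht, htpos⟩ : ∃ t : ℝ, t = 2*L/ε ∧ 0 < t := ⟨_, rfl, by positivity⟩
      have hw : ∀ s : ℝ, 0 < s → ⟪a, d⟫ + s * ⟪r, d⟫ ≥ (s*L - L)/2 := by
        intro s hs
        have h1 := h (v + s • r) (by
          intro hh
          have h0 : s • r = 0 := by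
            have := congrArg (· - v) hh
            simpa using this
          rcases smul_eq_zero.1 h0 with h' | h'
          · linarith
          · exact hr0 h')
          (by
            have heq2 : v + s • r - v = s • r := by abel
            rw [heq2, InnerProductGeometry.angle_smul_left_of_pos _ _ hs, hang])
        have heq : v + s • r - u = a + s • r := by rw [ha]; abel
        rw [heq] at h1
        have hne : a + s • r ≠ 0 := by
          intro h0
          have hz : ⟪a + s • r, a⟫ = 0 := by rw [h0, inner_zero_left]
          rw [inner_add_left, real_inner_smul_left, hra, haa] at hz
          nlinarith
        have h2 := inner_ge_of_angle_le hne (by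
          intro h0; rw [h0, norm_zero] at hd; linarith) h1
        rw [hd, mul_one, inner_add_left, real_inner_smul_left] at h2
        have h4 : ‖s • r‖ ≤ ‖a + s • r‖ + ‖a‖ := by
          have h5 := norm_sub_le (a + s • r) a
          have h6 : a + s • r - a = s • r := by abel
          rw [h6] at h5
          exact h5
        rw [norm_smul, hr, Real.norm_eq_abs, abs_of_pos hs] at h4
        linarith
      have hbound := hw t htpos
      have had : ⟪a, d⟫ ≤ L := by
        have h7 := real_inner_le_norm a d
        rw [hd, mul_one] at h7
        exact h7
      have htε : t * ε = 2*L := by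
        rw [ht]; field_simp
      rw [hε] at htε
      have h6 : t * ⟪r, d⟫ = t * L / 2 - 2*L := by linear_combination -1 * htε
      linarith [hbound, had, h6, hL0]
    -- the two boundary directions
    have hss : Real.sqrt 3 * Real.sqrt 3 = 3 := Real.mul_self_sqrt (by norm_num)
    have kp : L/2 ≤ ⟪(1/2 : ℝ) • a + (Real.sqrt 3 / 2) • b, d⟫ := by
      apply key
      · have hpp : ⟪(1/2 : ℝ) • a + (Real.sqrt 3 / 2) • b,
            (1/2 : ℝ) • a + (Real.sqrt 3 / 2) • b⟫ = L^2 := by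
          rw [real_inner_add_add_self]
          simp only [real_inner_smul_left, real_inner_smul_right, haa, hab, hbb]
          linear_combination (L^2/4) * hss
        rw [real_inner_self_eq_norm_sq] at hpp
        nlinarith [norm_nonneg ((1/2 : ℝ) • a + (Real.sqrt 3 / 2) • b)]
      · rw [inner_add_left, real_inner_smul_left, real_inner_smul_left, haa]
        linear_combination (Real.sqrt 3 / 2) * hba
    have km : L/2 ≤ ⟪(1/2 : ℝ) • a - (Real.sqrt 3 / 2) • b, d⟫ := by
      apply key
      · have hpp : ⟪(1/2 : ℝ) • a - (Real.sqrt 3 / 2) • b,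
            (1/2 : ℝ) • a - (Real.sqrt 3 / 2) • b⟫ = L^2 := by
          rw [real_inner_sub_sub_self]
          simp only [real_inner_smul_left, real_inner_smul_right, haa, hab, hbb]
          linear_combination (L^2/4) * hss
        rw [real_inner_self_eq_norm_sq] at hpp
        nlinarith [norm_nonneg ((1/2 : ℝ) • a - (Real.sqrt 3 / 2) • b)]
      · rw [inner_sub_left, real_inner_smul_left, real_inner_smul_left, haa]
        linear_combination (-Real.sqrt 3 / 2) * hba
    have hsum : ⟪(1/2 : ℝ) • a + (Real.sqrt 3 / 2) • b, d⟫ +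
        ⟪(1/2 : ℝ) • a - (Real.sqrt 3 / 2) • b, d⟫ = ⟪a, d⟫ := by
      rw [← inner_add_left]
      congr 1
      module
    have had : ⟪a, d⟫ ≤ L := by
      have h7 := real_inner_le_norm a d
      rw [hd, mul_one] at h7
      exact h7
    have heq : ⟪a, d⟫ = ‖a‖ * ‖d‖ := by
      rw [hd, mul_one, ← hL]
      linarith
    have hda := inner_eq_norm_mul_iff_real.1 heq
    rw [hd, one_smul] at hda
    rw [← hL] at hda
    rw [hda, smul_smul, inv_mul_cancel₀ (ne_of_gt hL0), one_smul]
  · -- containment direction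
    intro hdef w hwv hang
    have hwv0 : w - v ≠ 0 := sub_ne_zero.2 hwv
    have h1 := inner_ge_of_angle_le hwv0 ha0 hang
    have heq : w - u = (w - v) + a := by rw [ha]; abel
    have h2 : ⟪w - u, a⟫ = ⟪w - v, a⟫ + L^2 := by
      rw [heq, inner_add_left, haa]
    have hne : w - u ≠ 0 := by
      intro h0
      have hz : ⟪w - u, a⟫ = 0 := by rw [h0, inner_zero_left]
      rw [hz] at h2
      nlinarith [norm_nonneg (w - v)]
    have h3 : ‖w - u‖ ≤ ‖w - v‖ + L := by
      rw [heq]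
      exact norm_add_le _ _
    have h4 : ‖w - u‖ * ‖a‖ / 2 ≤ ⟪w - u, a⟫ := by
      rw [h2, ← hL]
      nlinarith [norm_nonneg (w - v), norm_nonneg (w - u)]
    have h5 := angle_le_of_inner_ge hne ha0 h4
    rw [hdef, InnerProductGeometry.angle_smul_right_of_pos _ _ (inv_pos.2 hL0)]
    exact h5
end

section
/- Let u, v, x, y be points in the plane with u ≠ v, x ≠ y, such that x lies in the side region of {u,v} adjacent to v and y lies in one of the center regions of {u,v} (i.e., y is in neither side region of {u,v}). If u lies in the side region of {x,y} adjacent to x, then v also lies in the side region of {x,y} adjacent to x. -/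
/-!
Put `b = v - u`, `p = x - v` and `e = y - x`, so that `x - u = b + p` and `y - v = e + p`.
In the plane, when `⟪b, p⟫ ≥ 0` the 120° cone around `b + p` is covered by the 120° cones
around `b` and `p`. So if `v` were not in the side region of `{x, y}` at `x`, i.e. `e` were
outside the cone around `p`, then `u` being in that side region would force `e` into the cone
around `b`. As `p` is there too by hypothesis, so would be `y - v = e + p` by convexity: then `y`
would lie in the side region of `{u, v}` at `v`.
-/

open Real InnerProductGeometry Module RealInnerProductSpace

lemma abs_le_mul_of_abs_add_le {s X₁ Y₁ X₂ Y₂ : ℝ} (hs : s ^ 2 = 3)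
    (hinner : 0 ≤ X₁ * X₂ + Y₁ * Y₂) (hsum : |Y₁ + Y₂| ≤ s * (X₁ + X₂)) (h₂ : s * X₂ < |Y₂|) :
    |Y₁| ≤ s * X₁ := by
  wlog hY₂ : 0 ≤ Y₂ generalizing Y₁ Y₂
  · have := this (Y₁ := -Y₁) (Y₂ := -Y₂) (by linarith) (by rwa [← neg_add, abs_neg])
      (by rwa [abs_neg]) (by linarith)
    rwa [abs_neg] at this
  rw [abs_of_nonneg hY₂] at h₂
  obtain ⟨hsum₁, hsum₂⟩ := abs_le.1 hsum
  refine abs_le.2 ⟨?_, by linarith⟩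
  by_contra! h₁
  -- in the coordinates `s X ∓ Y` of the two edges of the sector, `X₁ X₂ + Y₁ Y₂` is a sum of
  -- four negative products
  have key : 6 * (X₁ * X₂ + Y₁ * Y₂) = 2 * (s * X₁ - Y₁) * (s * X₂ - Y₂)
      + 2 * (s * X₁ + Y₁) * (s * X₂ + Y₂) - (s * X₁ - Y₁) * (s * X₂ + Y₂)
      - (s * X₁ + Y₁) * (s * X₂ - Y₂) := by
    linear_combination (-2 * X₁ * X₂) * hs
  nlinarith [mul_pos (by linarith : 0 < s * X₁ - Y₁) (by linarith : 0 < Y₂ - s * X₂),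
    mul_pos (by linarith : 0 < -(s * X₁ + Y₁)) (by linarith : 0 < s * X₂ + Y₂),
    mul_pos (by linarith : 0 < s * X₁ - Y₁) (by linarith : 0 < s * X₂ + Y₂),
    mul_pos (by linarith : 0 < -(s * X₁ + Y₁)) (by linarith : 0 < Y₂ - s * X₂)]

variable {E : Type*} [NormedAddCommGroup E] [InnerProductSpace ℝ E]

lemma InnerProductGeometry.ne_zero_of_angle_le_pi_div_three {a b : E} (h : angle a b ≤ π / 3) :
    a ≠ 0 := by
  rintro rfl
  rw [angle_zero_left] at h
  linarith [pi_pos]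

lemma InnerProductGeometry.angle_le_pi_div_three_iff {a b : E} (ha : a ≠ 0) (hb : b ≠ 0) :
    angle a b ≤ π / 3 ↔ ‖a‖ * ‖b‖ ≤ 2 * ⟪a, b⟫ := by
  have hab : 0 < ‖a‖ * ‖b‖ := by positivity
  rw [← strictAntiOn_cos.le_iff_ge ⟨by positivity, by linarith [pi_pos]⟩
    ⟨angle_nonneg a b, angle_le_pi a b⟩, cos_pi_div_three, cos_angle, le_div_iff₀ hab]
  constructor <;> intro h <;> linarith

lemma InnerProductGeometry.inner_pos_of_angle_le_pi_div_three {a b : E}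
    (h : angle a b ≤ π / 3) : 0 < ⟪a, b⟫ := by
  have ha := ne_zero_of_angle_le_pi_div_three h
  have hb := ne_zero_of_angle_le_pi_div_three (angle_comm a b ▸ h)
  rw [angle_le_pi_div_three_iff ha hb] at h
  have : 0 < ‖a‖ * ‖b‖ := by positivity
  linarith

lemma InnerProductGeometry.angle_add_le_pi_div_three {a b c : E} (ha : angle a c ≤ π / 3)
    (hb : angle b c ≤ π / 3) : angle (a + b) c ≤ π / 3 := by
  have hab : 0 < ⟪a + b, c⟫ := by
    rw [inner_add_left]
    linarith [inner_pos_of_angle_le_pi_div_three ha, inner_pos_of_angle_le_pi_div_three hb]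
  have ha₀ := ne_zero_of_angle_le_pi_div_three ha
  have hb₀ := ne_zero_of_angle_le_pi_div_three hb
  have hc₀ := ne_zero_of_angle_le_pi_div_three (angle_comm a c ▸ ha)
  rw [angle_le_pi_div_three_iff ha₀ hc₀] at ha
  rw [angle_le_pi_div_three_iff hb₀ hc₀] at hb
  rw [angle_le_pi_div_three_iff (fun h ↦ by simp [h] at hab) hc₀, inner_add_left]
  nlinarith [norm_add_le a b, norm_nonneg c]

lemma Orientation.angle_le_pi_div_three_iff_abs_areaForm_le [Fact (finrank ℝ E = 2)]
    (o : Orientation ℝ E (Fin 2)) {a z : E} (ha : a ≠ 0) (hz : z ≠ 0) :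
    angle a z ≤ π / 3 ↔ |o.areaForm a z| ≤ √3 * ⟪a, z⟫ := by
  have hsq := o.inner_sq_add_areaForm_sq a z
  have hnorm : 0 ≤ ‖a‖ * ‖z‖ := by positivity
  rw [angle_le_pi_div_three_iff ha hz]
  constructor
  · intro h
    have hinner : 0 ≤ ⟪a, z⟫ := by linarith
    rw [← sqrt_sq hinner, ← sqrt_mul (by norm_num)]
    exact abs_le_sqrt (by nlinarith)
  · intro h
    have hinner : 0 ≤ ⟪a, z⟫ :=
      nonneg_of_mul_nonneg_right ((abs_nonneg _).trans h) (by positivity)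
    have h3 : o.areaForm a z ^ 2 ≤ 3 * ⟪a, z⟫ ^ 2 := by
      have := sq_le_sq' (abs_le.1 h).1 (abs_le.1 h).2
      rwa [mul_pow, sq_sqrt (by norm_num)] at this
    nlinarith [sq_nonneg (‖a‖ * ‖z‖ - 2 * ⟪a, z⟫)]

lemma InnerProductGeometry.angle_le_pi_div_three_of_angle_add_le [Fact (finrank ℝ E = 2)]
    {b p e : E} (hbp : 0 ≤ ⟪b, p⟫) (h : angle e (b + p) ≤ π / 3) (hp : π / 3 < angle e p) :
    angle e b ≤ π / 3 := by
  obtain rfl | hb := eq_or_ne b 0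
  · rw [zero_add] at h
    linarith
  obtain rfl | hp₀ := eq_or_ne p 0
  · simpa using h
  have he := ne_zero_of_angle_le_pi_div_three h
  have hbp₀ := ne_zero_of_angle_le_pi_div_three (angle_comm e _ ▸ h)
  have : FiniteDimensional ℝ E := .of_fact_finrank_eq_two
  let o : Orientation ℝ E (Fin 2) := (finBasisOfFinrankEq ℝ E Fact.out).orientation
  rw [o.angle_le_pi_div_three_iff_abs_areaForm_le he hb]
  rw [o.angle_le_pi_div_three_iff_abs_areaForm_le he hbp₀, map_add, inner_add_right] at h
  rw [← not_le, o.angle_le_pi_div_three_iff_abs_areaForm_le he hp₀, not_le] at hp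
  have hinner : 0 ≤ ⟪e, b⟫ * ⟪e, p⟫ + o.areaForm e b * o.areaForm e p := by
    rw [o.inner_mul_inner_add_areaForm_mul_areaForm]
    positivity
  exact abs_le_mul_of_abs_add_le (sq_sqrt (by norm_num)) hinner h hp

theorem claim23_general (u v x y : EuclideanSpace ℝ (Fin 2))
    (hxv : x ≠ v) (hx : InnerProductGeometry.angle (x - v) (v - u) ≤ π / 3)
    (hy2 : InnerProductGeometry.angle (y - v) (v - u) > π / 3)
    (hu : InnerProductGeometry.angle (u - x) (x - y) ≤ π / 3) :
    v ≠ x ∧ InnerProductGeometry.angle (v - x) (x - y) ≤ π / 3 := by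
  refine ⟨hxv.symm, ?_⟩
  by_contra! hv
  have : Fact (finrank ℝ (EuclideanSpace ℝ (Fin 2)) = 2) := ⟨finrank_euclideanSpace_fin⟩
  have hyx : angle (y - x) (v - u) ≤ π / 3 := by
    refine angle_le_pi_div_three_of_angle_add_le (p := x - v) ?_ ?_ ?_
    · rw [real_inner_comm]
      exact (inner_pos_of_angle_le_pi_div_three hx).le
    · rwa [show v - u + (x - v) = x - u by abel, angle_comm, ← angle_neg_neg, neg_sub, neg_sub]
    · rwa [angle_comm, ← angle_neg_neg, neg_sub, neg_sub]
  have hyv := angle_add_le_pi_div_three hyx hx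
  rw [sub_add_sub_cancel] at hyv
  linarith

theorem claim23 (u v x y : EuclideanSpace ℝ (Fin 2))
    (huv : u ≠ v) (hxy : x ≠ y)
    (hxv : x ≠ v) (hx : InnerProductGeometry.angle (x - v) (v - u) ≤ π / 3)
    (hy1 : InnerProductGeometry.angle (y - u) (u - v) > π / 3)
    (hy2 : InnerProductGeometry.angle (y - v) (v - u) > π / 3)
    (hux : u ≠ x) (hu : InnerProductGeometry.angle (u - x) (x - y) ≤ π / 3) :
    v ≠ x ∧ InnerProductGeometry.angle (v - x) (x - y) ≤ π / 3 :=
  claim23_general u v x y hxv hx hy2 hu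
end

section
/- Let u, v, x, y be points in the plane with u ≠ v, x ≠ y, such that x lies in the side region of {u,v} adjacent to v and y lies in one of the center regions of {u,v}. If v lies in the side region of {x,y} adjacent to y, then u also lies in the side region of {x,y} adjacent to y. -/
/-!
Put `a = y - x`, `b = v - y`, `w = u - v`. The hypotheses say that `b` is within `π/3` of `a`,
that `w` is within `π/3` of `a + b` and that `w` is more than `π/3` away from `b`; the claim is
that `u - y = b + w` is within `π/3` of `a`. In the plane `a + b` lies between `a` and `b`, so the
last two conditions push `w` to the side of `b` where `a` lies, within `π/3` of `a`. Since the
vectors within `π/3` of `a` form a convex cone, `b + w` then lies in it as well.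
-/

open Real InnerProductGeometry Module
open scoped RealInnerProductSpace

variable {E : Type*} [NormedAddCommGroup E] [InnerProductSpace ℝ E]

namespace InnerProductGeometry

theorem left_ne_zero_of_angle_le_pi_div_three {p q : E} (h : angle p q ≤ π / 3) : p ≠ 0 := by
  rintro rfl
  rw [angle_zero_left] at h
  linarith [pi_pos]

theorem right_ne_zero_of_angle_le_pi_div_three {p q : E} (h : angle p q ≤ π / 3) : q ≠ 0 :=
  left_ne_zero_of_angle_le_pi_div_three (angle_comm p q ▸ h)

theorem angle_le_pi_div_three_iff_s4 {p q : E} (hp : p ≠ 0) (hq : q ≠ 0) :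
    angle p q ≤ π / 3 ↔ ‖p‖ * ‖q‖ ≤ 2 * ⟪p, q⟫ := by
  have hpq : 0 < ‖p‖ * ‖q‖ := by positivity
  rw [← strictAntiOn_cos.le_iff_ge ⟨by positivity, by linarith [pi_pos]⟩
    ⟨angle_nonneg p q, angle_le_pi p q⟩, cos_pi_div_three, cos_angle, le_div_iff₀ hpq]
  constructor <;> intro h <;> linarith

theorem angle_add_le_pi_div_three_s4 {p q a : E} (hp : angle p a ≤ π / 3) (hq : angle q a ≤ π / 3) :
    angle (p + q) a ≤ π / 3 := by
  have hp0 := left_ne_zero_of_angle_le_pi_div_three hp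
  have ha := right_ne_zero_of_angle_le_pi_div_three hp
  rw [angle_le_pi_div_three_iff_s4 hp0 ha] at hp
  rw [angle_le_pi_div_three_iff_s4 (left_ne_zero_of_angle_le_pi_div_three hq) ha] at hq
  have hpa : 0 < ⟪p, a⟫ := by
    have : 0 < ‖p‖ * ‖a‖ := by positivity
    linarith
  have hqa : 0 ≤ ⟪q, a⟫ := by linarith [mul_nonneg (norm_nonneg q) (norm_nonneg a)]
  have hpq : p + q ≠ 0 := by
    rintro h
    rw [← neg_eq_of_add_eq_zero_right h, inner_neg_left] at hqa
    linarith
  rw [angle_le_pi_div_three_iff_s4 hpq ha, inner_add_left]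
  calc ‖p + q‖ * ‖a‖ ≤ (‖p‖ + ‖q‖) * ‖a‖ := by gcongr; exact norm_add_le p q
    _ ≤ 2 * (⟪p, a⟫ + ⟪q, a⟫) := by linarith

end InnerProductGeometry

namespace Orientation

variable [Fact (finrank ℝ E = 2)] (o : Orientation ℝ E (Fin 2))

local notation "ω" => o.areaForm

/-- The cone of vectors within `π/3` of `p` is cut out by the two half-planes
`0 ≤ √3 * ⟪p, ·⟫ ± ω p ·`. -/
theorem angle_le_pi_div_three_iff_abs_areaForm_le_s4 {p q : E} (hp : p ≠ 0) (hq : q ≠ 0) :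
    angle p q ≤ π / 3 ↔ |ω p q| ≤ √3 * ⟪p, q⟫ := by
  have hs : √3 ^ 2 = 3 := sq_sqrt (by norm_num)
  have hL : ⟪p, q⟫ ^ 2 + ω p q ^ 2 = (‖p‖ * ‖q‖) ^ 2 := by
    rw [mul_pow]; exact o.inner_sq_add_areaForm_sq p q
  have hN : 0 ≤ ‖p‖ * ‖q‖ := by positivity
  rw [angle_le_pi_div_three_iff_s4 hp hq]
  constructor
  · intro h
    have hI : 0 ≤ ⟪p, q⟫ := by linarith
    rw [← abs_of_nonneg (by positivity : 0 ≤ √3 * ⟪p, q⟫), ← sq_le_sq, mul_pow, hs]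
    nlinarith
  · intro h
    have hI : 0 ≤ √3 * ⟪p, q⟫ := (abs_nonneg _).trans h
    have hW : ω p q ^ 2 ≤ 3 * ⟪p, q⟫ ^ 2 := by
      rw [← hs, ← mul_pow, sq_le_sq, abs_of_nonneg hI]; exact h
    have hI' : 0 ≤ ⟪p, q⟫ := nonneg_of_mul_nonneg_right hI (by positivity)
    nlinarith

/-- In complex notation: `‖c‖² · x̄w = x̄c · c̄w`, paired with the functional `z ↦ √3 Re z + Im z`. -/
theorem sqrt_three_mul_norm_sq_mul_sqrt_three_inner_add_areaForm (c x w : E) :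
    √3 * ‖c‖ ^ 2 * (√3 * ⟪x, w⟫ + ω x w) =
      (√3 * ⟪c, x⟫ + ω c x) * (√3 * ⟪c, w⟫ + ω c w) - 2 * ω c x * (√3 * ⟪c, w⟫ - ω c w) := by
  have hs : √3 ^ 2 = 3 := sq_sqrt (by norm_num)
  linear_combination (-(√3 ^ 2)) * o.inner_mul_inner_add_areaForm_mul_areaForm c x w
    - √3 * o.inner_mul_areaForm_sub c x w + ω c x * ω c w * hs

theorem sqrt_three_mul_norm_sq_mul_sqrt_three_inner_sub_areaForm (c x w : E) :
    √3 * ‖c‖ ^ 2 * (√3 * ⟪x, w⟫ - ω x w) =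
      (√3 * ⟪c, x⟫ - ω c x) * (√3 * ⟪c, w⟫ - ω c w) + 2 * ω c x * (√3 * ⟪c, w⟫ + ω c w) := by
  have h := (-o).sqrt_three_mul_norm_sq_mul_sqrt_three_inner_add_areaForm c x w
  simp only [areaForm_neg_orientation, LinearMap.neg_apply] at h
  linear_combination h

theorem sqrt_three_mul_inner_add_areaForm_nonneg_of_angle_add_le {a b w : E} (hω : 0 ≤ ω a b)
    (hab : angle a b ≤ π / 3) (habw : angle (a + b) w ≤ π / 3) :
    0 ≤ √3 * ⟪a, w⟫ + ω a w := by
  have hab0 := left_ne_zero_of_angle_le_pi_div_three habw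
  rw [o.angle_le_pi_div_three_iff_abs_areaForm_le_s4 (left_ne_zero_of_angle_le_pi_div_three hab)
    (right_ne_zero_of_angle_le_pi_div_three hab), abs_le] at hab
  rw [o.angle_le_pi_div_three_iff_abs_areaForm_le_s4 hab0
    (right_ne_zero_of_angle_le_pi_div_three habw), abs_le] at habw
  obtain ⟨-, hab⟩ := hab
  obtain ⟨habw₁, habw₂⟩ := habw
  have hca : ω (a + b) a = -ω a b := by simp [o.areaForm_swap b a]
  have hIa : ⟪a + b, a⟫ = ‖a‖ ^ 2 + ⟪a, b⟫ := by
    rw [inner_add_left, real_inner_self_eq_norm_sq, real_inner_comm]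
  rw [← mul_nonneg_iff_of_pos_left (by positivity : 0 < √3 * ‖a + b‖ ^ 2),
    o.sqrt_three_mul_norm_sq_mul_sqrt_three_inner_add_areaForm, hca, hIa]
  have : 0 ≤ √3 * ‖a‖ ^ 2 := by positivity
  have : 0 ≤ √3 * (‖a‖ ^ 2 + ⟪a, b⟫) + -ω a b := by linarith
  have : 0 ≤ √3 * ⟪a + b, w⟫ + ω (a + b) w := by linarith
  have : 0 ≤ √3 * ⟪a + b, w⟫ - ω (a + b) w := by linarith
  nlinarith

theorem angle_le_pi_div_three_of_angle_add_le_of_areaForm_nonneg {a b w : E}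
    (hω : 0 ≤ ω a b) (hab : angle a b ≤ π / 3) (habw : angle (a + b) w ≤ π / 3)
    (hbw : π / 3 < angle b w) : angle a w ≤ π / 3 := by
  have haw_left := o.sqrt_three_mul_inner_add_areaForm_nonneg_of_angle_add_le hω hab habw
  have hbw_right : 0 ≤ √3 * ⟪b, w⟫ - ω b w := by
    have := (-o).sqrt_three_mul_inner_add_areaForm_nonneg_of_angle_add_le (a := b) (b := a)
      (by simpa [areaForm_neg_orientation, o.areaForm_swap b a] using hω)
      (angle_comm a b ▸ hab) (add_comm a b ▸ habw)
    simpa [areaForm_neg_orientation, sub_eq_add_neg] using this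
  have ha := left_ne_zero_of_angle_le_pi_div_three hab
  have hb := right_ne_zero_of_angle_le_pi_div_three hab
  have hw := right_ne_zero_of_angle_le_pi_div_three habw
  rw [o.angle_le_pi_div_three_iff_abs_areaForm_le_s4 ha hb, abs_le] at hab
  rw [← not_le, o.angle_le_pi_div_three_iff_abs_areaForm_le_s4 hb hw, not_le, lt_abs] at hbw
  have hbw_left : 0 ≤ -(√3 * ⟪b, w⟫ + ω b w) := by
    rcases hbw with h | h <;> linarith
  have haw_right : 0 ≤ √3 * ⟪a, w⟫ - ω a w := by
    rw [← mul_nonneg_iff_of_pos_left (by positivity : 0 < √3 * ‖b‖ ^ 2),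
      o.sqrt_three_mul_norm_sq_mul_sqrt_three_inner_sub_areaForm, o.areaForm_swap b a,
      real_inner_comm]
    have : 0 ≤ √3 * ⟪a, b⟫ + ω a b := by linarith [hab.1]
    nlinarith
  rw [o.angle_le_pi_div_three_iff_abs_areaForm_le_s4 ha hw, abs_le]
  constructor <;> linarith

end Orientation

namespace InnerProductGeometry

theorem angle_le_pi_div_three_of_angle_add_le_s4 [Fact (finrank ℝ E = 2)] {a b w : E}
    (hab : angle a b ≤ π / 3) (habw : angle (a + b) w ≤ π / 3) (hbw : π / 3 < angle b w) :
    angle a w ≤ π / 3 := by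
  have : FiniteDimensional ℝ E := .of_fact_finrank_eq_two
  let o : Orientation ℝ E (Fin 2) := (finBasisOfFinrankEq ℝ E Fact.out).orientation
  rcases le_total 0 (o.areaForm a b) with hω | hω
  · exact o.angle_le_pi_div_three_of_angle_add_le_of_areaForm_nonneg hω hab habw hbw
  · refine (-o).angle_le_pi_div_three_of_angle_add_le_of_areaForm_nonneg ?_ hab habw hbw
    simpa [Orientation.areaForm_neg_orientation] using hω

end InnerProductGeometry

theorem claim32_general (u v x y : EuclideanSpace ℝ (Fin 2))
    (hx : InnerProductGeometry.angle (x - v) (v - u) ≤ π / 3)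
    (hy2 : InnerProductGeometry.angle (y - v) (v - u) > π / 3)
    (hv : InnerProductGeometry.angle (v - y) (y - x) ≤ π / 3) :
    u ≠ y ∧ InnerProductGeometry.angle (u - y) (y - x) ≤ π / 3 := by
  have : Fact (finrank ℝ (EuclideanSpace ℝ (Fin 2)) = 2) := ⟨finrank_euclideanSpace_fin⟩
  have hab : angle (y - x) (v - y) ≤ π / 3 := angle_comm (v - y) (y - x) ▸ hv
  have habw : angle (y - x + (v - y)) (u - v) ≤ π / 3 := by
    rw [← angle_neg_neg]
    convert hx using 2 <;> abel
  have hbw : π / 3 < angle (v - y) (u - v) := by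
    rwa [← angle_neg_neg, neg_sub, neg_sub]
  have hw : angle (u - v) (y - x) ≤ π / 3 :=
    angle_comm (y - x) (u - v) ▸ angle_le_pi_div_three_of_angle_add_le_s4 hab habw hbw
  have h : angle (u - y) (y - x) ≤ π / 3 := by
    simpa only [sub_add_sub_cancel'] using angle_add_le_pi_div_three_s4 hv hw
  exact ⟨sub_ne_zero.mp (left_ne_zero_of_angle_le_pi_div_three h), h⟩

theorem claim32 (u v x y : EuclideanSpace ℝ (Fin 2))
    (huv : u ≠ v) (hxy : x ≠ y)
    (hxv : x ≠ v) (hx : InnerProductGeometry.angle (x - v) (v - u) ≤ π / 3)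
    (hy1 : InnerProductGeometry.angle (y - u) (u - v) > π / 3)
    (hy2 : InnerProductGeometry.angle (y - v) (v - u) > π / 3)
    (hvy : v ≠ y) (hv : InnerProductGeometry.angle (v - y) (y - x) ≤ π / 3) :
    u ≠ y ∧ InnerProductGeometry.angle (u - y) (y - x) ≤ π / 3 :=
  claim32_general u v x y hx hy2 hv
end

section
/- Let n ≥ 2 be even, and let T be a graph on vertices p_1, …, p_n whose edge set consists of all edges {p_{2i−1}, p_{2i}} for 1 ≤ i ≤ n/2, together with, for each 1 ≤ i ≤ n/2 − 1, exactly one edge e_i joining some vertex of {p_{2i−1}, p_{2i}} to some vertex of {p_{2i+1}, p_{2i+2}}. Then T is a tree (connected and acyclic with n−1 edges), and for every 1 ≤ j ≤ n−1 the graph distance in T between p_j and p_{j+1} is at most 3. -/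
/-!
Vertex `k` (the paper's `p_{k+1}`) lies in block `k / 2`, and distinct vertices of one block are
adjacent. Every vertex `v ≠ 0` reaches a smaller one: an odd `v` its block mate, an even `v = 2j`
the endpoint `a (j - 1)` of the connector into its block; so `T` is connected. The pairs and the
connectors are distinct edges, `n / 2 + (n / 2 - 1) = n - 1` of them, so the connected graph `T`
is a tree. Finally the connector `a i — b i` has one endpoint in the block of `2i + 1` and the
other in the block of `2i + 2`, which gives a path of length at most 3 between them.
-/

open SimpleGraph

theorem SimpleGraph.connected_of_exists_lt_reachable {V : Type*} [Preorder V] [WellFoundedLT V]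
    {G : SimpleGraph V} (v₀ : V) (h : ∀ v, v ≠ v₀ → ∃ w < v, G.Reachable v w) :
    G.Connected := by
  refine (connected_iff_exists_forall_reachable G).2 ⟨v₀, fun v => ?_⟩
  induction v using WellFoundedLT.induction with
  | _ v ih =>
    by_cases hv : v = v₀
    · exact hv ▸ .rfl
    · obtain ⟨w, hwv, hvw⟩ := h v hv
      exact (ih w hwv).trans hvw.symm

structure IsMatchingPlusConnectors {n : ℕ} (T : SimpleGraph (Fin n)) (a b : ℕ → ℕ) : Prop where
  connector_mem : ∀ i, i < n / 2 - 1 →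
    (a i = 2 * i ∨ a i = 2 * i + 1) ∧ (b i = 2 * i + 2 ∨ b i = 2 * i + 3)
  adj_iff : ∀ u v : Fin n, T.Adj u v ↔
    ((∃ i, i < n / 2 ∧
        (((u : ℕ) = 2 * i ∧ (v : ℕ) = 2 * i + 1) ∨ ((u : ℕ) = 2 * i + 1 ∧ (v : ℕ) = 2 * i))) ∨
     (∃ i, i < n / 2 - 1 ∧
        (((u : ℕ) = a i ∧ (v : ℕ) = b i) ∨ ((u : ℕ) = b i ∧ (v : ℕ) = a i))))

namespace IsMatchingPlusConnectors

variable {n : ℕ} {T : SimpleGraph (Fin n)} {a b : ℕ → ℕ}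

theorem adj_or_eq_of_div_two_eq (hT : IsMatchingPlusConnectors T a b) {u v : Fin n}
    (h : (u : ℕ) / 2 = (v : ℕ) / 2) : T.Adj u v ∨ u = v := by
  rcases eq_or_ne u v with huv | huv
  · exact .inr huv
  · have : (u : ℕ) ≠ v := Fin.val_ne_of_ne huv
    exact .inl ((hT.adj_iff u v).2 (.inl ⟨(u : ℕ) / 2, by omega, by omega⟩))

theorem reachable_of_div_two_eq (hT : IsMatchingPlusConnectors T a b) {u v : Fin n}
    (h : (u : ℕ) / 2 = (v : ℕ) / 2) : T.Reachable u v :=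
  (hT.adj_or_eq_of_div_two_eq h).elim Adj.reachable (· ▸ .rfl)

theorem edist_le_one_of_div_two_eq (hT : IsMatchingPlusConnectors T a b) {u v : Fin n}
    (h : (u : ℕ) / 2 = (v : ℕ) / 2) : T.edist u v ≤ 1 :=
  edist_le_one_iff_adj_or_eq.2 (hT.adj_or_eq_of_div_two_eq h)

theorem adj_connector (hT : IsMatchingPlusConnectors T a b) {i : ℕ} (hi : i < n / 2 - 1)
    {u v : Fin n} (hu : (u : ℕ) = a i) (hv : (v : ℕ) = b i) : T.Adj u v :=
  (hT.adj_iff u v).2 (.inr ⟨i, hi, .inl ⟨hu, hv⟩⟩)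

theorem connected (hT : IsMatchingPlusConnectors T a b) (hn : n ≠ 0) (he : Even n) :
    T.Connected := by
  have : NeZero n := ⟨hn⟩
  refine connected_of_exists_lt_reachable 0 fun v hv => ?_
  have hv0 : (v : ℕ) ≠ 0 := Fin.val_ne_zero_iff.2 hv
  obtain ⟨m, hm⟩ := he
  rcases Nat.even_or_odd' (v : ℕ) with ⟨j, hj | hj⟩
  · obtain ⟨ha, hb⟩ := hT.connector_mem (j - 1) (by omega)
    let A : Fin n := ⟨a (j - 1), by omega⟩
    let B : Fin n := ⟨b (j - 1), by omega⟩
    refine ⟨A, Fin.lt_def.2 (by simp only [A]; omega), ?_⟩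
    exact (hT.reachable_of_div_two_eq (v := B) (by simp only [B]; omega)).trans
      (hT.adj_connector (by omega) rfl rfl).symm.reachable
  · exact ⟨⟨v - 1, by omega⟩, Fin.lt_def.2 (by simp only; omega),
      hT.reachable_of_div_two_eq (by simp only; omega)⟩

def edgeOfIndex (n : ℕ) (a b : ℕ → ℕ) : Fin (n / 2) ⊕ Fin (n / 2 - 1) → Sym2 ℕ
  | .inl i => s(2 * i, 2 * i + 1)
  | .inr i => s(a i, b i)

theorem edgeOfIndex_injective (hT : IsMatchingPlusConnectors T a b) :
    (edgeOfIndex n a b).Injective := by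
  -- pair `i` lies inside block `i`, connector `i` joins blocks `i` and `i + 1`
  have hab (i : Fin (n / 2 - 1)) := hT.connector_mem i i.2
  rintro (i | i) (j | j) h <;>
    simp only [edgeOfIndex, Sym2.eq_iff, Sum.inl.injEq, Sum.inr.injEq, reduceCtorEq] at h ⊢ <;>
    grind

theorem image_val_edgeSet (hT : IsMatchingPlusConnectors T a b) :
    Sym2.map Fin.val '' T.edgeSet = Set.range (edgeOfIndex n a b) := by
  ext z
  constructor
  · rintro ⟨e, he, rfl⟩
    induction e using Sym2.ind with | _ u v => ?_
    rcases (hT.adj_iff u v).1 he with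
      ⟨i, hi, ⟨hu, hv⟩ | ⟨hu, hv⟩⟩ | ⟨i, hi, ⟨hu, hv⟩ | ⟨hu, hv⟩⟩
    · exact ⟨.inl ⟨i, hi⟩, by simp [edgeOfIndex, hu, hv]⟩
    · exact ⟨.inl ⟨i, hi⟩, by simp [edgeOfIndex, hu, hv, Sym2.eq_swap]⟩
    · exact ⟨.inr ⟨i, hi⟩, by simp [edgeOfIndex, hu, hv]⟩
    · exact ⟨.inr ⟨i, hi⟩, by simp [edgeOfIndex, hu, hv, Sym2.eq_swap]⟩
  · rintro ⟨i | i, rfl⟩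
    · exact ⟨s(⟨2 * i, by omega⟩, ⟨2 * i + 1, by omega⟩),
        (hT.adj_iff _ _).2 (.inl ⟨i, i.2, .inl ⟨rfl, rfl⟩⟩), rfl⟩
    · obtain ⟨ha, hb⟩ := hT.connector_mem i i.2
      exact ⟨s(⟨a i, by omega⟩, ⟨b i, by omega⟩), hT.adj_connector i.2 rfl rfl, rfl⟩

theorem ncard_edgeSet (hT : IsMatchingPlusConnectors T a b) (he : Even n) :
    T.edgeSet.ncard = n - 1 := by
  calc T.edgeSet.ncard = (Sym2.map Fin.val '' T.edgeSet).ncard :=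
        (Set.ncard_image_of_injective _ (Sym2.map.injective Fin.val_injective)).symm
    _ = Nat.card (Fin (n / 2) ⊕ Fin (n / 2 - 1)) := by
        rw [hT.image_val_edgeSet, Set.ncard_range_of_injective hT.edgeOfIndex_injective]
    _ = n - 1 := by
        obtain ⟨m, hm⟩ := he
        simp only [Nat.card_sum, Nat.card_fin]
        omega

theorem dist_le_three (hT : IsMatchingPlusConnectors T a b) (he : Even n) {u v : Fin n}
    (huv : (u : ℕ) + 1 = v) : T.dist u v ≤ 3 := by
  suffices T.edist u v ≤ 3 from ENat.toNat_le_of_le_natCast this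
  obtain ⟨m, hm⟩ := he
  rcases Nat.even_or_odd' (u : ℕ) with ⟨i, hi | hi⟩
  · exact (hT.edist_le_one_of_div_two_eq (by omega)).trans (by norm_num)
  · obtain ⟨ha, hb⟩ := hT.connector_mem i (by omega)
    let A : Fin n := ⟨a i, by omega⟩
    let B : Fin n := ⟨b i, by omega⟩
    calc T.edist u v ≤ T.edist u A + T.edist A B + T.edist B v :=
          (T.edist_triangle (v := B)).trans (add_le_add_left T.edist_triangle _)
      _ ≤ 1 + 1 + 1 := by
          gcongr
          · exact hT.edist_le_one_of_div_two_eq (by simp only [A]; omega)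
          · exact edist_le_one_iff_adj_or_eq.2 (.inl (hT.adj_connector (by omega) rfl rfl))
          · exact hT.edist_le_one_of_div_two_eq (by simp only [B]; omega)
      _ = 3 := by norm_num

end IsMatchingPlusConnectors

theorem matching_plus_connectors_is_tree_and_3hop (n : ℕ) (hn : 2 ≤ n) (hne : Even n)
    (T : SimpleGraph (Fin n)) (a b : ℕ → ℕ)
    (hab : ∀ i, i < n / 2 - 1 →
      (a i = 2 * i ∨ a i = 2 * i + 1) ∧ (b i = 2 * i + 2 ∨ b i = 2 * i + 3))
    (hadj : ∀ u v : Fin n, T.Adj u v ↔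
      ((∃ i, i < n / 2 ∧
          (((u : ℕ) = 2 * i ∧ (v : ℕ) = 2 * i + 1) ∨ ((u : ℕ) = 2 * i + 1 ∧ (v : ℕ) = 2 * i))) ∨
       (∃ i, i < n / 2 - 1 ∧
          (((u : ℕ) = a i ∧ (v : ℕ) = b i) ∨ ((u : ℕ) = b i ∧ (v : ℕ) = a i))))) :
    T.IsTree ∧ T.edgeSet.ncard = n - 1 ∧
      ∀ u v : Fin n, (u : ℕ) + 1 = (v : ℕ) → T.dist u v ≤ 3 := by
  have hT : IsMatchingPlusConnectors T a b := ⟨hab, hadj⟩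
  have hcard := hT.ncard_edgeSet hne
  refine ⟨isTree_iff_connected_and_card.2 ⟨hT.connected (by omega) hne, ?_⟩, hcard,
    fun u v => hT.dist_le_three hne⟩
  rw [Nat.card_coe_set_eq, hcard, Nat.card_fin]
  omega
end

section
/- Let n ≥ 2 and consider the points 0, 1, 2, …, n−1 on the real line. Let T be any spanning tree on these n points with the property that for every vertex v, all neighbors of v in T lie strictly on the same side of v (all greater than v or all less than v). Then the total weight of T, i.e., the sum over edges {a,b} of |a − b|, is at least 2n − 3. -/
/-!
Writing the weight of an edge `{a, b}` with `a < b` as `1 + #{v | a < v < b}` and swapping sums,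
the weight of `T` is `(n - 1) + ∑ v, c v`, where `c v` counts the edges passing strictly over `v`.
Every interior vertex is passed over: if all neighbours of `v` lie below `v`, the edge of `T`
crossing the gap between `v` and `v + 1` cannot start at `v`, so it starts below `v`
(symmetrically if all neighbours lie above). Hence `∑ v, c v ≥ n - 2`.
-/

open Finset

theorem Fintype.card_le_sum_add_two {V : Type*} [Fintype V] [LinearOrder V] (c : V → ℕ)
    (hc : ∀ x v y, x < v → v < y → c v ≠ 0) : Fintype.card V ≤ ∑ v, c v + 2 := by
  classical
  set Z := univ.filter (c · = 0)
  have hZ : #Z ≤ 2 := by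
    rcases Z.eq_empty_or_nonempty with hZ | hZ
    · simp [hZ]
    refine (card_le_card fun z hz => ?_).trans (card_le_two (a := Z.min' hZ) (b := Z.max' hZ))
    by_contra hne
    simp only [mem_insert, mem_singleton, not_or] at hne
    exact hc _ z _ ((Z.min'_le z hz).lt_of_ne' hne.1) ((Z.le_max' z hz).lt_of_ne hne.2)
      (mem_filter.1 hz).2
  calc Fintype.card V = #Z + #(univ.filter (c · ≠ 0)) := (card_filter_add_card_filter_not _).symm
    _ ≤ 2 + ∑ v ∈ univ.filter (c · ≠ 0), c v := by
        gcongr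
        simpa using card_nsmul_le_sum _ c 1 fun v hv => Nat.one_le_iff_ne_zero.2 (mem_filter.1 hv).2
    _ ≤ ∑ v, c v + 2 := by
        rw [add_comm]
        gcongr
        exact subset_univ _

theorem Sym2.lift_abs_sub_eq_card_Ioo_add_one {n : ℕ} {e : Sym2 (Fin n)} (he : ¬ e.IsDiag) :
    Sym2.lift ⟨fun a b : Fin n => |(a : ℝ) - (b : ℝ)|, fun _ _ => abs_sub_comm _ _⟩ e =
      #(Ioo e.inf e.sup) + 1 := by
  induction e using Sym2.ind with
  | _ a b =>
  wlog hab : a < b generalizing a b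
  · rw [Sym2.eq_swap]
    exact this b a (by rwa [Sym2.eq_swap]) ((Ne.symm he).lt_of_le (not_lt.1 hab))
  have hab' : (a : ℕ) < b := hab
  simp only [Sym2.lift_mk, Sym2.inf_mk, Sym2.sup_mk, inf_of_le_left hab.le, sup_of_le_right hab.le,
    Fin.card_Ioo]
  rw [abs_sub_comm, abs_of_pos (sub_pos.2 (by exact_mod_cast hab')),
    Nat.cast_sub (by omega : 1 ≤ (b : ℕ) - a), Nat.cast_sub hab'.le]
  ring

namespace SimpleGraph

theorem sum_lift_abs_sub_edgeFinset {n : ℕ} (G : SimpleGraph (Fin n)) [DecidableRel G.Adj] :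
    ∑ e ∈ G.edgeFinset,
        Sym2.lift ⟨fun a b : Fin n => |(a : ℝ) - (b : ℝ)|, fun _ _ => abs_sub_comm _ _⟩ e =
      #G.edgeFinset + ∑ v, #{e ∈ G.edgeFinset | e.inf < v ∧ v < e.sup} := by
  have hcount : ∑ e ∈ G.edgeFinset, #(Ioo e.inf e.sup) =
      ∑ v, #{e ∈ G.edgeFinset | e.inf < v ∧ v < e.sup} := by
    simp_rw [← filter_lt_lt_eq_Ioo]
    exact sum_card_bipartiteAbove_eq_sum_card_bipartiteBelow _
  rw [sum_congr rfl fun e he => Sym2.lift_abs_sub_eq_card_Ioo_add_one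
    (G.not_isDiag_of_mem_edgeSet (mem_edgeFinset.1 he)), sum_add_distrib, ← hcount]
  push_cast
  simp [add_comm]

variable {V : Type*} [LinearOrder V] {G : SimpleGraph V}

def IsOneSided (G : SimpleGraph V) : Prop :=
  ∀ v, (∀ u, G.Adj v u → u < v) ∨ (∀ u, G.Adj v u → v < u)

theorem Connected.exists_adj_lt_le (hG : G.Connected) {x v : V} (hxv : x < v) :
    ∃ a b, G.Adj a b ∧ a < v ∧ v ≤ b := by
  obtain ⟨p⟩ := hG.preconnected x v
  obtain ⟨d, -, hd₁, hd₂⟩ := p.exists_boundary_dart (Set.Iio v) hxv (lt_irrefl v)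
  exact ⟨_, _, d.adj, hd₁, not_lt.1 hd₂⟩

theorem Connected.exists_adj_le_lt (hG : G.Connected) {v y : V} (hvy : v < y) :
    ∃ a b, G.Adj a b ∧ a ≤ v ∧ v < b := by
  obtain ⟨p⟩ := hG.preconnected v y
  obtain ⟨d, -, hd₁, hd₂⟩ := p.exists_boundary_dart (Set.Iic v) le_rfl hvy.not_ge
  exact ⟨_, _, d.adj, hd₁, not_le.1 hd₂⟩

theorem IsOneSided.exists_adj_lt_lt (hside : G.IsOneSided) (hG : G.Connected) {x v y : V}
    (hxv : x < v) (hvy : v < y) : ∃ a b, G.Adj a b ∧ a < v ∧ v < b := by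
  rcases hside v with hbelow | habove
  · obtain ⟨a, b, hab, hav, hvb⟩ := hG.exists_adj_le_lt hvy
    refine ⟨a, b, hab, hav.lt_of_ne ?_, hvb⟩
    rintro rfl
    exact (hbelow b hab).not_gt hvb
  · obtain ⟨a, b, hab, hav, hvb⟩ := hG.exists_adj_lt_le hxv
    refine ⟨a, b, hab, hav, hvb.lt_of_ne' ?_⟩
    rintro rfl
    exact (habove a hab.symm).not_gt hav

theorem IsOneSided.card_le_sum_card_edges_over [Fintype V] [DecidableRel G.Adj]
    (hside : G.IsOneSided) (hG : G.Connected) :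
    Fintype.card V ≤ ∑ v, #{e ∈ G.edgeFinset | e.inf < v ∧ v < e.sup} + 2 := by
  refine Fintype.card_le_sum_add_two _ fun x v y hxv hvy => ?_
  obtain ⟨a, b, hab, hav, hvb⟩ := hside.exists_adj_lt_lt hG hxv hvy
  refine (card_pos.2 ⟨s(a, b), mem_filter.2 ⟨G.mem_edgeFinset.2 hab, ?_⟩⟩).ne'
  simp [inf_of_le_left (hav.trans hvb).le, sup_of_le_right (hav.trans hvb).le, hav, hvb]

end SimpleGraph

theorem one_sided_tree_on_line_weight_general (n : ℕ)
    (T : SimpleGraph (Fin n)) [DecidableRel T.Adj] (hT : T.IsTree)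
    (hside : ∀ v : Fin n, (∀ u, T.Adj v u → u < v) ∨ (∀ u, T.Adj v u → v < u)) :
    (2 * n - 3 : ℝ) ≤
      ∑ e ∈ T.edgeFinset,
        Sym2.lift ⟨fun a b : Fin n => |(a : ℝ) - (b : ℝ)|, fun a b => abs_sub_comm _ _⟩ e := by
  have hedges := hT.card_edgeFinset
  have hcover := SimpleGraph.IsOneSided.card_le_sum_card_edges_over hside hT.connected
  rw [Fintype.card_fin] at hedges hcover
  rify at hedges hcover
  rw [T.sum_lift_abs_sub_edgeFinset]
  push_cast
  linarith

theorem one_sided_tree_on_line_weight (n : ℕ) (hn : 2 ≤ n)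
    (T : SimpleGraph (Fin n)) [DecidableRel T.Adj] (hT : T.IsTree)
    (hside : ∀ v : Fin n, (∀ u, T.Adj v u → u < v) ∨ (∀ u, T.Adj v u → v < u)) :
    (2 * n - 3 : ℝ) ≤
      ∑ e ∈ T.edgeFinset,
        Sym2.lift ⟨fun a b : Fin n => |(a : ℝ) - (b : ℝ)|, fun a b => abs_sub_comm _ _⟩ e :=
  one_sided_tree_on_line_weight_general n T hT hside
end

section
/- Let P be a finite set of distinct points in the plane, let T be a minimum-weight spanning tree of the complete Euclidean graph on P, and let {v,u} and {v,w} be two distinct edges of T sharing the vertex v. Then the angle ∠(u, v, w) is at least π/3. -/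
open Real

/-- The total Euclidean weight of a graph on a finite vertex type, where each vertex `v`
is located at the point `pos v`. -/
noncomputable def graphWeight {V : Type*} [Fintype V]
    (pos : V → EuclideanSpace ℝ (Fin 2)) (T : SimpleGraph V) : ℝ :=
  letI := Classical.decRel T.Adj
  ∑ e ∈ T.edgeFinset,
    Sym2.lift ⟨fun a b => dist (pos a) (pos b), fun a b => dist_comm _ _⟩ e

/-!
Exchanging the edge `vu` of a spanning tree for the chord `uw` of its path `u v w` gives another
spanning tree (it is still connected and has the same number of edges), so minimality forces
`|uv| ≤ |uw|`, and symmetrically `|wv| ≤ |uw|`. Thus `uw` is a longest side of the triangle `uvw`,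
and by the law of cosines the angle opposite a longest side is at least `π / 3`.
-/

namespace EuclideanGeometry

variable {V P : Type*} [NormedAddCommGroup V] [InnerProductSpace ℝ V] [MetricSpace P]
  [NormedAddTorsor V P]

theorem pi_div_three_le_angle_of_dist_le_of_dist_le {p₁ p₂ p₃ : P}
    (h₁ : dist p₁ p₂ ≤ dist p₁ p₃) (h₃ : dist p₃ p₂ ≤ dist p₁ p₃) : π / 3 ≤ ∠ p₁ p₂ p₃ := by
  by_contra! h
  have hp₁ : p₁ ≠ p₂ := by
    rintro rfl
    rw [angle_self_left] at h
    linarith [pi_pos]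
  have hp₃ : p₃ ≠ p₂ := by
    rintro rfl
    rw [angle_self_right] at h
    linarith [pi_pos]
  have hcos : 1 / 2 < cos (∠ p₁ p₂ p₃) := by
    rw [← cos_pi_div_three]
    exact cos_lt_cos_of_nonneg_of_le_pi (angle_nonneg _ _ _) (by linarith [pi_pos]) h
  have hlaw := dist_sq_eq_dist_sq_add_dist_sq_sub_two_mul_dist_mul_dist_mul_cos_angle p₁ p₂ p₃
  have ha := dist_pos.2 hp₁
  have hb := dist_pos.2 hp₃
  -- `c² = a² + b² - 2ab cos θ < a² + b² - ab ≤ max a b ^ 2 ≤ c²`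
  nlinarith [mul_pos ha hb, mul_le_mul h₁ h₃ hb.le dist_nonneg]

end EuclideanGeometry

namespace SimpleGraph

variable {V : Type*} {G H : SimpleGraph V}

theorem Connected.of_forall_adj_reachable (hG : G.Connected)
    (h : ∀ ⦃a b⦄, G.Adj a b → H.Reachable a b) : H.Connected := by
  have := hG.nonempty
  refine Connected.mk fun a b => ?_
  have hab := hG a b
  rw [reachable_eq_reflTransGen] at hab h ⊢
  exact Relation.reflTransGen_closed h a b hab

theorem IsAcyclic.not_adj_of_adj_of_adj (hG : G.IsAcyclic) {u v w : V} (hvu : G.Adj v u)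
    (hvw : G.Adj v w) : ¬G.Adj u w := by
  classical
  exact fun huw => hG.cliqueFree le_rfl {v, u, w} (is3Clique_triple_iff.2 ⟨hvu, hvw, huw⟩)

theorem edgeFinset_deleteEdges_sup_edge [DecidableEq V] [Fintype G.edgeSet] {x y s t : V}
    [Fintype (G.deleteEdges {s(x, y)} ⊔ edge s t).edgeSet] (h : s ≠ t) :
    (G.deleteEdges {s(x, y)} ⊔ edge s t).edgeFinset =
      insert s(s, t) (G.edgeFinset.erase s(x, y)) := by
  ext e
  simp only [mem_edgeFinset, edgeSet_sup, edgeSet_deleteEdges, edgeSet_edge_of_ne h]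
  simp [and_comm]

theorem IsTree.deleteEdges_sup_edge [Finite V] (hT : G.IsTree) {u v w : V} (hvu : G.Adj v u)
    (hvw : G.Adj v w) (huw : u ≠ w) : (G.deleteEdges {s(v, u)} ⊔ edge u w).IsTree := by
  classical
  have := Fintype.ofFinite V
  have hvw' : (G.deleteEdges {s(v, u)} ⊔ edge u w).Adj v w := by
    simp [hvw, hvu.ne, huw.symm]
  have hwu' : (G.deleteEdges {s(v, u)} ⊔ edge u w).Adj w u := by
    simp [edge_adj, huw.symm]
  rw [isTree_iff_connected_and_card]
  constructor
  · refine hT.connected.of_forall_adj_reachable fun a b hab => ?_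
    by_cases hab' : s(a, b) = s(v, u)
    · rcases Sym2.eq_iff.1 hab' with ⟨rfl, rfl⟩ | ⟨rfl, rfl⟩
      · exact hvw'.reachable.trans hwu'.reachable
      · exact (hvw'.reachable.trans hwu'.reachable).symm
    · exact Adj.reachable (by simp [hab, hab'])
  · have hnuw := hT.isAcyclic.not_adj_of_adj_of_adj hvu hvw
    rw [Nat.card_eq_fintype_card, ← edgeFinset_card, edgeFinset_deleteEdges_sup_edge huw,
      Finset.card_insert_of_notMem (by simp [hnuw]),
      Finset.card_erase_add_one (by simpa using hvu), hT.card_edgeFinset, Nat.card_eq_fintype_card]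

end SimpleGraph

section graphWeight

variable {V : Type*} [Fintype V] (pos : V → EuclideanSpace ℝ (Fin 2)) {G : SimpleGraph V}

theorem graphWeight_eq_sum [Fintype G.edgeSet] :
    graphWeight pos G = ∑ e ∈ G.edgeFinset,
      Sym2.lift ⟨fun a b => dist (pos a) (pos b), fun _ _ => dist_comm _ _⟩ e := by
  unfold graphWeight
  congr!

theorem graphWeight_deleteEdges_sup_edge {x y s t : V} (hxy : G.Adj x y) (hst : ¬G.Adj s t)
    (h : s ≠ t) :
    graphWeight pos (G.deleteEdges {s(x, y)} ⊔ SimpleGraph.edge s t) =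
      graphWeight pos G - dist (pos x) (pos y) + dist (pos s) (pos t) := by
  classical
  rw [graphWeight_eq_sum, graphWeight_eq_sum, SimpleGraph.edgeFinset_deleteEdges_sup_edge h,
    Finset.sum_insert (by simp [hst]), Finset.sum_erase_eq_sub (by simpa using hxy)]
  simp only [Sym2.lift_mk]
  ring

end graphWeight

def IsMinSpanningTree {V : Type*} [Fintype V] (pos : V → EuclideanSpace ℝ (Fin 2))
    (T : SimpleGraph V) : Prop :=
  T.IsTree ∧ ∀ T' : SimpleGraph V, T'.IsTree → graphWeight pos T ≤ graphWeight pos T'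

theorem IsMinSpanningTree.dist_le_dist_of_adj_of_adj {V : Type*} [Fintype V]
    {pos : V → EuclideanSpace ℝ (Fin 2)} {T : SimpleGraph V} (hT : IsMinSpanningTree pos T)
    {u v w : V} (hvu : T.Adj v u) (hvw : T.Adj v w) (huw : u ≠ w) :
    dist (pos u) (pos v) ≤ dist (pos u) (pos w) := by
  have hswap := hT.2 _ (hT.1.deleteEdges_sup_edge hvu hvw huw)
  rw [graphWeight_deleteEdges_sup_edge pos hvu (hT.1.isAcyclic.not_adj_of_adj_of_adj hvu hvw) huw]
    at hswap
  linarith [dist_comm (pos u) (pos v)]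

theorem mst_angle_ge (P : Finset (EuclideanSpace ℝ (Fin 2)))
    (T : SimpleGraph {x // x ∈ P}) (hT : T.IsTree)
    (hmin : ∀ T' : SimpleGraph {x // x ∈ P}, T'.IsTree →
      graphWeight (Subtype.val : {x // x ∈ P} → EuclideanSpace ℝ (Fin 2)) T ≤
        graphWeight (Subtype.val : {x // x ∈ P} → EuclideanSpace ℝ (Fin 2)) T')
    (u v w : {x // x ∈ P}) (hvu : T.Adj v u) (hvw : T.Adj v w) (huw : u ≠ w) :
    π / 3 ≤ EuclideanGeometry.angle (u : EuclideanSpace ℝ (Fin 2)) v w := by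
  have hmst : IsMinSpanningTree Subtype.val T := ⟨hT, hmin⟩
  apply EuclideanGeometry.pi_div_three_le_angle_of_dist_le_of_dist_le
  · exact hmst.dist_le_dist_of_adj_of_adj hvu hvw huw
  · rw [dist_comm (u : EuclideanSpace ℝ (Fin 2))]
    exact hmst.dist_le_dist_of_adj_of_adj hvw hvu huw.symm
end

section
/- Let u ≠ v be points in the plane and let C_u = {w : angle(w − u, v − u) ≤ π/3} and C_v = {w : angle(w − v, u − v) ≤ π/3} be the closed 2π/3-cones at u directed toward v and at v directed toward u, respectively. Then v ∈ C_u, u ∈ C_v, and moreover the entire side region of {u,v} adjacent to v, namely {w ≠ v : angle(w − v, v − u) ≤ π/3}, is contained in C_u. -/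
open Real InnerProductGeometry

/-- Exterior angle inequality: for the triangle with sides `y`, `x` and `x + y`, the interior angle
between `y` and `x + y` is at most the exterior angle between `y` and `x`. -/
theorem angle_add_le_angle {V : Type*} [NormedAddCommGroup V] [InnerProductSpace ℝ V]
    (x : V) {y : V} (hy : y ≠ 0) : angle (x + y) y ≤ angle x y := by
  rw [angle_eq_angle_add_add_angle_add x hy, angle_comm (x + y) y]
  exact le_add_of_nonneg_left (angle_nonneg x (x + y))

theorem center_orientation_properties (u v : EuclideanSpace ℝ (Fin 2)) (huv : u ≠ v) :
    InnerProductGeometry.angle (v - u) (v - u) ≤ π / 3 ∧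
    InnerProductGeometry.angle (u - v) (u - v) ≤ π / 3 ∧
    ∀ w : EuclideanSpace ℝ (Fin 2), w ≠ v →
      InnerProductGeometry.angle (w - v) (v - u) ≤ π / 3 →
      InnerProductGeometry.angle (w - u) (v - u) ≤ π / 3 := by
  have hvu : v - u ≠ 0 := sub_ne_zero.mpr huv.symm
  have hpi : 0 ≤ π / 3 := by positivity
  refine ⟨(angle_self hvu).trans_le hpi,
    (angle_self (sub_ne_zero.mpr huv)).trans_le hpi, fun w _ hw => ?_⟩
  calc angle (w - u) (v - u) = angle (w - v + (v - u)) (v - u) := by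
        rw [sub_add_sub_cancel]
    _ ≤ angle (w - v) (v - u) := angle_add_le_angle _ hvu
    _ ≤ π / 3 := hw
end

section
/- Let u ≠ v be points in the plane. If x is in the side region of {u,v} adjacent to u and y is in the side region of {u,v} adjacent to v, then it is impossible that simultaneously u lies in the side region of {x,y} adjacent to x and v lies in the side region of {x,y} adjacent to y. -/
open Real

open scoped RealInnerProductSpace

private lemma half_le_inner {a b : EuclideanSpace ℝ (Fin 2)}
    (h : InnerProductGeometry.angle a b ≤ π / 3) : ‖a‖ * ‖b‖ / 2 ≤ ⟪a, b⟫ := by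
  have hcos : Real.cos (InnerProductGeometry.angle a b) = ⟪a, b⟫ / (‖a‖ * ‖b‖) :=
    InnerProductGeometry.cos_angle a b
  have h1 : Real.cos (π / 3) ≤ Real.cos (InnerProductGeometry.angle a b) :=
    Real.cos_le_cos_of_nonneg_of_le_pi (InnerProductGeometry.angle_nonneg a b)
      (by linarith [Real.pi_pos]) h
  rw [Real.cos_pi_div_three, hcos] at h1
  rcases eq_or_lt_of_le (mul_nonneg (norm_nonneg a) (norm_nonneg b)) with h0 | h0
  · rw [← h0, div_zero] at h1; norm_num at h1
  · rw [le_div_iff₀ h0] at h1; linarith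

theorem no_mutual_side_containment (u v x y : EuclideanSpace ℝ (Fin 2))
    (huv : u ≠ v) (hxy : x ≠ y)
    (hxu : x ≠ u) (hx : InnerProductGeometry.angle (x - u) (u - v) ≤ π / 3)
    (hyv : y ≠ v) (hy : InnerProductGeometry.angle (y - v) (v - u) ≤ π / 3) :
    ¬ (InnerProductGeometry.angle (u - x) (x - y) ≤ π / 3 ∧
        InnerProductGeometry.angle (v - y) (y - x) ≤ π / 3) := by
  rintro ⟨h1, h2⟩
  have hp := half_le_inner hx
  have hr := half_le_inner hy
  have h1' := half_le_inner h1
  have h2' := half_le_inner h2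
  -- rewrite negated vectors
  have e1 : v - u = -(u - v) := by abel
  have e2 : u - x = -(x - u) := by abel
  have e3 : v - y = -(y - v) := by abel
  have e4 : y - x = -(x - y) := by abel
  rw [e1, inner_neg_right, norm_neg] at hr
  rw [e2, inner_neg_left, norm_neg] at h1'
  rw [e3, e4, inner_neg_left, inner_neg_right, neg_neg, norm_neg, norm_neg] at h2'
  -- key vector identity
  have key : (x - u) + (u - v) = (y - v) + (x - y) := by abel
  have keyq : ⟪x - u, u - v⟫ + ⟪u - v, u - v⟫ = ⟪y - v, u - v⟫ + ⟪x - y, u - v⟫ := by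
    rw [← inner_add_left, ← inner_add_left, key]
  have keys : ⟪x - u, x - y⟫ + ⟪u - v, x - y⟫ = ⟪y - v, x - y⟫ + ⟪x - y, x - y⟫ := by
    rw [← inner_add_left, ← inner_add_left, key]
  have nq : ⟪u - v, u - v⟫ = ‖u - v‖ ^ 2 := real_inner_self_eq_norm_sq _
  have ns : ⟪x - y, x - y⟫ = ‖x - y‖ ^ 2 := real_inner_self_eq_norm_sq _
  have cs1 : ⟪x - y, u - v⟫ ≤ ‖x - y‖ * ‖u - v‖ := real_inner_le_norm _ _
  have cs2 : ⟪u - v, x - y⟫ ≤ ‖u - v‖ * ‖x - y‖ := real_inner_le_norm _ _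
  have hQ : 0 < ‖u - v‖ := norm_pos_iff.mpr (sub_ne_zero.mpr huv)
  have hS : 0 < ‖x - y‖ := norm_pos_iff.mpr (sub_ne_zero.mpr hxy)
  have hP : 0 < ‖x - u‖ := norm_pos_iff.mpr (sub_ne_zero.mpr hxu)
  have hR : 0 < ‖y - v‖ := norm_pos_iff.mpr (sub_ne_zero.mpr hyv)
  -- from keyq: ‖x-y‖ ≥ ‖x-u‖/2 + ‖u-v‖ + ‖y-v‖/2
  have ineq1 : ‖x - u‖ / 2 + ‖u - v‖ + ‖y - v‖ / 2 ≤ ‖x - y‖ := by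
    have := cs1
    nlinarith [mul_pos hP hQ, mul_pos hR hQ]
  have ineq2 : ‖x - u‖ / 2 + ‖y - v‖ / 2 + ‖x - y‖ ≤ ‖u - v‖ := by
    nlinarith [mul_pos hP hS, mul_pos hR hS]
  linarith
end
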